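/- Let E be a real Hilbert space and let f, g : E → ℝ be differentiable everywhere, with f convex, and denote their gradients by ∇f and ∇g. Let θ* ∈ E, M > 0, L > 0, an integer T ≥ 1, and set η = M/(√T·L). Let θ_0, θ_1, …, θ_{T−1} ∈ E satisfy θ_{t+1} = θ_t − η·∇g(θ_t) for 0 ≤ t ≤ T−2. Assume ‖θ_t − θ*‖ ≤ √2·M for all 0 ≤ t ≤ T−1, ‖∇g(θ)‖ ≤ L for all θ ∈ E, and that the largest gradient gap occurs at t = 0, i.e., ‖∇f(θ_0) − ∇g(θ_0)‖ ≥ ‖∇f(θ_t) − ∇g(θ_t)‖ for all 0 ≤ t ≤ T−1. Then min_{0≤t≤T−1} (f(θ_t) − f(θ*)) ≤ √2·M·‖∇f(θ_0) − ∇g(θ_0)‖ + (3·M·L)/(2·√T). -/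

import Mathlib

/-!
Gradient descent on `g` is gradient descent on `f` with the biased directions `∇g(θ_t)`.
Convexity gives `f(θ_t) - f(θ*) ≤ ⟪∇f(θ_t), θ_t - θ*⟫`; splitting `∇f = ∇g + (∇f - ∇g)`, the
`∇g` part telescopes as in the classical regret bound for gradient descent, giving
`‖θ_0 - θ*‖² / (2η) + η/2 ∑ ‖∇g(θ_t)‖² ≤ (3/2) M L √T`, while by Cauchy–Schwarz each bias term
is at most `√2 M ‖∇f(θ_t) - ∇g(θ_t)‖ ≤ √2 M ‖∇f(θ_0) - ∇g(θ_0)‖`. The minimum is at most the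
average.
-/

open scoped RealInnerProductSpace
open Finset

theorem ConvexOn.sub_le_of_hasFDerivAt {E : Type*} [NormedAddCommGroup E] [NormedSpace ℝ E]
    {s : Set E} {f : E → ℝ} {f' : E →L[ℝ] ℝ} {x y : E} (hf : ConvexOn ℝ s f)
    (hx : x ∈ s) (hy : y ∈ s) (hf' : HasFDerivAt f f' x) :
    f x - f y ≤ f' (x - y) := by
  have hline : HasDerivAt (f ∘ AffineMap.lineMap (k := ℝ) x y) (f' (y - x)) 0 := by
    refine HasFDerivAt.comp_hasDerivAt (0 : ℝ) ?_ AffineMap.hasDerivAt_lineMap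
    simpa using hf'
  have hconv : ConvexOn ℝ (AffineMap.lineMap (k := ℝ) x y ⁻¹' s)
      (f ∘ AffineMap.lineMap (k := ℝ) x y) :=
    hf.comp_affineMap _
  have hslope := hconv.le_slope_of_hasDerivAt (by simpa using hx) (by simpa using hy)
    zero_lt_one hline
  rw [slope_def_field] at hslope
  have hneg : f' (x - y) = -f' (y - x) := by rw [← map_neg, neg_sub]
  simp only [Function.comp_apply, AffineMap.lineMap_apply_zero, AffineMap.lineMap_apply_one,
    sub_zero, div_one] at hslope
  linarith

theorem ConvexOn.sub_le_inner_gradient {E : Type*} [NormedAddCommGroup E]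
    [InnerProductSpace ℝ E] [CompleteSpace E] {s : Set E} {f : E → ℝ} {x y : E}
    (hf : ConvexOn ℝ s f) (hx : x ∈ s) (hy : y ∈ s) (hfx : DifferentiableAt ℝ f x) :
    f x - f y ≤ ⟪gradient f x, x - y⟫ := by
  rw [inner_gradient_left]
  exact hf.sub_le_of_hasFDerivAt hx hy hfx.hasFDerivAt

section Descent

variable {E : Type*} [NormedAddCommGroup E] [InnerProductSpace ℝ E]

theorem inner_eq_norm_sq_sub_norm_sq_descent_step {η : ℝ} (hη : η ≠ 0) (x v p : E) :
    ⟪v, x - p⟫ = (‖x - p‖ ^ 2 - ‖x - η • v - p‖ ^ 2) / (2 * η) + η * ‖v‖ ^ 2 / 2 := by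
  rw [show x - η • v - p = (x - p) - η • v by abel, norm_sub_sq_real (x - p), real_inner_smul_right,
    real_inner_comm, norm_smul, mul_pow, Real.norm_eq_abs, sq_abs]
  field_simp
  ring

theorem sum_inner_le_of_descent_steps {η : ℝ} (hη : 0 < η) {x v : ℕ → E} {n : ℕ}
    (hstep : ∀ t, t + 2 ≤ n → x (t + 1) = x t - η • v t) (p : E) :
    ∑ t ∈ range n, ⟪v t, x t - p⟫ ≤
      ‖x 0 - p‖ ^ 2 / (2 * η) + η / 2 * ∑ t ∈ range n, ‖v t‖ ^ 2 := by
  -- `x m - η • v m` stands in for the iterate `x (m + 1)`, which is not given for `m + 1 = n`.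
  have htelescope : ∀ m, m + 1 ≤ n → ∑ t ∈ range (m + 1), ⟪v t, x t - p⟫ =
      (‖x 0 - p‖ ^ 2 - ‖x m - η • v m - p‖ ^ 2) / (2 * η) +
        η / 2 * ∑ t ∈ range (m + 1), ‖v t‖ ^ 2 := by
    intro m
    induction m with
    | zero =>
      intro _
      simp only [zero_add, sum_range_one]
      rw [inner_eq_norm_sq_sub_norm_sq_descent_step hη.ne']
      ring
    | succ m ih =>
      intro hm
      rw [sum_range_succ, sum_range_succ _ (m + 1), ih (by omega), hstep m (by omega),
        inner_eq_norm_sq_sub_norm_sq_descent_step hη.ne' (x m - η • v m)]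
      ring
  rcases n with _ | m
  · simp only [range_zero, sum_empty, mul_zero, add_zero]
    positivity
  · rw [htelescope m le_rfl]
    have : 0 ≤ ‖x m - η • v m - p‖ ^ 2 / (2 * η) := by positivity
    linarith [sub_div (‖x 0 - p‖ ^ 2) (‖x m - η • v m - p‖ ^ 2) (2 * η)]

end Descent

theorem ConvexOn.sum_sub_le_of_descent_steps {E : Type*} [NormedAddCommGroup E]
    [InnerProductSpace ℝ E] [CompleteSpace E] {f : E → ℝ} (hf : ConvexOn ℝ Set.univ f)
    (hdiff : Differentiable ℝ f) {η : ℝ} (hη : 0 < η) {x v : ℕ → E} {n : ℕ}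
    (hstep : ∀ t, t + 2 ≤ n → x (t + 1) = x t - η • v t) {p : E} {R G : ℝ}
    (hx₀ : ‖x 0 - p‖ ≤ R) (hv : ∀ t < n, ‖v t‖ ≤ G) :
    ∑ t ∈ range n, (f (x t) - f p) ≤
      R ^ 2 / (2 * η) + η / 2 * (n * G ^ 2) +
        ∑ t ∈ range n, ⟪gradient f (x t) - v t, x t - p⟫ := by
  have hv_sq : ∑ t ∈ range n, ‖v t‖ ^ 2 ≤ n * G ^ 2 := by
    simpa using sum_le_sum fun t ht =>
      pow_le_pow_left₀ (norm_nonneg (v t)) (hv t (mem_range.mp ht)) 2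
  calc ∑ t ∈ range n, (f (x t) - f p)
      ≤ ∑ t ∈ range n, (⟪v t, x t - p⟫ + ⟪gradient f (x t) - v t, x t - p⟫) := by
        refine sum_le_sum fun t _ => ?_
        rw [← inner_add_left, add_sub_cancel]
        exact hf.sub_le_inner_gradient trivial trivial (hdiff _)
    _ ≤ ‖x 0 - p‖ ^ 2 / (2 * η) + η / 2 * ∑ t ∈ range n, ‖v t‖ ^ 2 +
          ∑ t ∈ range n, ⟪gradient f (x t) - v t, x t - p⟫ := by
        rw [sum_add_distrib]
        gcongr
        exact sum_inner_le_of_descent_steps hη hstep p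
    _ ≤ _ := by gcongr

theorem one_step_matching_largest_gap_at_init_general
    {E : Type*} [NormedAddCommGroup E] [InnerProductSpace ℝ E] [CompleteSpace E]
    (f g : E → ℝ) (hf : Differentiable ℝ f)
    (hconv : ConvexOn ℝ Set.univ f)
    (θstar : E) (M L : ℝ) (hM : 0 < M) (hL : 0 < L)
    (T : ℕ) (hT : 1 ≤ T)
    (η : ℝ) (hη : η = M / (Real.sqrt T * L))
    (θ : ℕ → E) (hstep : ∀ t, t + 2 ≤ T → θ (t + 1) = θ t - η • gradient g (θ t))
    (hbdd : ∀ t < T, ‖θ t - θstar‖ ≤ Real.sqrt 2 * M)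
    (hgrad : ∀ x : E, ‖gradient g x‖ ≤ L)
    (hmax : ∀ t < T, ‖gradient f (θ t) - gradient g (θ t)‖ ≤
      ‖gradient f (θ 0) - gradient g (θ 0)‖) :
    ∃ t < T, f (θ t) - f θstar ≤
      Real.sqrt 2 * M * ‖gradient f (θ 0) - gradient g (θ 0)‖ +
        3 * M * L / (2 * Real.sqrt T) := by
  set Δ := ‖gradient f (θ 0) - gradient g (θ 0)‖
  have hsqrtT : 0 < Real.sqrt T := Real.sqrt_pos.mpr (by exact_mod_cast hT)
  have hη0 : 0 < η := hη ▸ by positivity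
  have hbias : ∀ t ∈ range T,
      ⟪gradient f (θ t) - gradient g (θ t), θ t - θstar⟫ ≤ Real.sqrt 2 * M * Δ := by
    intro t ht
    rw [mem_range] at ht
    calc _ ≤ ‖gradient f (θ t) - gradient g (θ t)‖ * ‖θ t - θstar‖ := real_inner_le_norm _ _
      _ ≤ Δ * (Real.sqrt 2 * M) := by gcongr; exacts [hmax t ht, hbdd t ht]
      _ = Real.sqrt 2 * M * Δ := mul_comm _ _
  have hsum : ∑ t ∈ range T, (f (θ t) - f θstar) ≤
      ∑ _t ∈ range T, (Real.sqrt 2 * M * Δ + 3 * M * L / (2 * Real.sqrt T)) :=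
    calc _ ≤ (Real.sqrt 2 * M) ^ 2 / (2 * η) + η / 2 * (T * L ^ 2) +
          ∑ t ∈ range T, ⟪gradient f (θ t) - gradient g (θ t), θ t - θstar⟫ :=
        hconv.sum_sub_le_of_descent_steps hf hη0 hstep (hbdd 0 hT) fun t _ => hgrad (θ t)
      _ ≤ (Real.sqrt 2 * M) ^ 2 / (2 * η) + η / 2 * (T * L ^ 2) +
          ∑ _t ∈ range T, Real.sqrt 2 * M * Δ := by gcongr with t ht; exact hbias t ht
      _ = _ := by
        rw [sum_const, sum_const, card_range, nsmul_eq_mul, nsmul_eq_mul, hη]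
        field_simp
        rw [Real.sq_sqrt zero_le_two, Real.sq_sqrt (Nat.cast_nonneg T)]
        ring
  obtain ⟨t, ht, hle⟩ := exists_le_of_sum_le (nonempty_range_iff.mpr (by omega)) hsum
  exact ⟨t, mem_range.mp ht, hle⟩

/-- Abstract form of Proposition 1: if the gradient discrepancy between `f` and `g`
is largest at initialization, the one-step matching loss bounds the minimal
suboptimality along the gradient-descent trajectory on `g`. -/
theorem one_step_matching_largest_gap_at_init
    {E : Type*} [NormedAddCommGroup E] [InnerProductSpace ℝ E] [CompleteSpace E]
    (f g : E → ℝ) (hf : Differentiable ℝ f) (hg : Differentiable ℝ g)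
    (hconv : ConvexOn ℝ Set.univ f)
    (θstar : E) (M L : ℝ) (hM : 0 < M) (hL : 0 < L)
    (T : ℕ) (hT : 1 ≤ T)
    (η : ℝ) (hη : η = M / (Real.sqrt T * L))
    (θ : ℕ → E) (hstep : ∀ t, t + 2 ≤ T → θ (t + 1) = θ t - η • gradient g (θ t))
    (hbdd : ∀ t < T, ‖θ t - θstar‖ ≤ Real.sqrt 2 * M)
    (hgrad : ∀ x : E, ‖gradient g x‖ ≤ L)
    (hmax : ∀ t < T, ‖gradient f (θ t) - gradient g (θ t)‖ ≤
      ‖gradient f (θ 0) - gradient g (θ 0)‖) :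
    ∃ t < T, f (θ t) - f θstar ≤
      Real.sqrt 2 * M * ‖gradient f (θ 0) - gradient g (θ 0)‖ +
        3 * M * L / (2 * Real.sqrt T) :=
  one_step_matching_largest_gap_at_init_general f g hf hconv θstar M L hM hL T hT η hη θ hstep hbdd
    hgrad hmax
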